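/- In a qubit system, the unbiased two-outcome POVM A = ((1/2)(I + λ·σ), (1/2)(I − λ·σ)), where λ ∈ ℝ³ with |λ| ≤ 1 and σ = (σ₁,σ₂,σ₃) are the Pauli matrices, is α-sharp if and only if α ≤ (1 + |λ|²)/2. Equivalently, the maximum of ‖b‖_∞ over positive semidefinite 2×2 operators b satisfying b ≤ (1/2)(I + λ·σ) and b ≤ (1/2)(I − λ·σ) equals (1 − |λ|²)/2. -/

import Mathlib

open scoped ComplexOrder

/-- The Pauli matrices. -/
def pauli1 : Matrix (Fin 2) (Fin 2) ℂ := !![0, 1; 1, 0]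
def pauli2 : Matrix (Fin 2) (Fin 2) ℂ := !![0, -Complex.I; Complex.I, 0]
def pauli3 : Matrix (Fin 2) (Fin 2) ℂ := !![1, 0; 0, -1]

/-!
Write Hermitian `2 × 2` matrices as `x₀ • 1 + x·σ`. Such a matrix has trace `2 x₀` and
determinant `x₀² - |x|²`, so it is positive semidefinite iff `|x| ≤ x₀`, and its largest
eigenvalue is `x₀ + |x|`. The two effects are `½(1 ± l·σ)`. If `c = c₀ • 1 + v·σ ≥ 0` lies below
both, then `|l/2 ∓ v| ≤ ½ - c₀`, and the parallelogram law gives `|l|²/4 + |v|² ≤ (½ - c₀)²`;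
together with `|v| ≤ c₀` this bounds `c₀ + |v|` by `m = (1 - |l|²)/2`. Conversely, for a unit
vector `w ⊥ l` the matrix `(m/2)(1 + w·σ)` lies below both effects and has largest eigenvalue `m`.
So every common lower bound satisfies `c ≤ (1 - α) • 1` iff `m ≤ 1 - α`.
-/

open Matrix

theorem Matrix.IsHermitian.posSemidef_iff_trace_nonneg_and_det_nonneg {𝕜 : Type*} [RCLike 𝕜]
    {A : Matrix (Fin 2) (Fin 2) 𝕜} (hA : A.IsHermitian) :
    A.PosSemidef ↔ 0 ≤ A.trace ∧ 0 ≤ A.det := by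
  rw [hA.posSemidef_iff_eigenvalues_nonneg, hA.trace_eq_sum_eigenvalues,
    hA.det_eq_prod_eigenvalues, Fin.sum_univ_two, Fin.prod_univ_two, Pi.le_def, Fin.forall_fin_two]
  norm_cast
  simp only [Pi.zero_apply]
  constructor
  · rintro ⟨h₀, h₁⟩
    exact ⟨add_nonneg h₀ h₁, mul_nonneg h₀ h₁⟩
  · rintro ⟨hsum, hprod⟩
    constructor <;> nlinarith

noncomputable def blochMatrix (x₀ : ℝ) (x : Fin 3 → ℝ) : Matrix (Fin 2) (Fin 2) ℂ :=
  x₀ • 1 + x 0 • pauli1 + x 1 • pauli2 + x 2 • pauli3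

theorem blochMatrix_eq_of (x₀ : ℝ) (x : Fin 3 → ℝ) :
    blochMatrix x₀ x =
      !![(x₀ + x 2 : ℂ), x 0 - x 1 * Complex.I; x 0 + x 1 * Complex.I, x₀ - x 2] := by
  ext i j
  fin_cases i <;> fin_cases j <;> simp [blochMatrix, pauli1, pauli2, pauli3, sub_eq_add_neg]

theorem blochMatrix_sub (x₀ y₀ : ℝ) (x y : Fin 3 → ℝ) :
    blochMatrix x₀ x - blochMatrix y₀ y = blochMatrix (x₀ - y₀) (x - y) := by
  simp only [blochMatrix, sub_smul, Pi.sub_apply]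
  abel

theorem smul_blochMatrix (r x₀ : ℝ) (x : Fin 3 → ℝ) :
    r • blochMatrix x₀ x = blochMatrix (r * x₀) (r • x) := by
  simp only [blochMatrix, smul_add, smul_smul, Pi.smul_apply, smul_eq_mul]

theorem smul_one_eq_blochMatrix (r : ℝ) :
    r • (1 : Matrix (Fin 2) (Fin 2) ℂ) = blochMatrix r 0 := by
  simp [blochMatrix]

theorem isHermitian_blochMatrix (x₀ : ℝ) (x : Fin 3 → ℝ) : (blochMatrix x₀ x).IsHermitian := by
  rw [blochMatrix_eq_of]
  ext i j
  fin_cases i <;> fin_cases j <;> simp [Complex.ext_iff]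

theorem trace_blochMatrix (x₀ : ℝ) (x : Fin 3 → ℝ) :
    (blochMatrix x₀ x).trace = (2 * x₀ : ℝ) := by
  rw [blochMatrix_eq_of, trace_fin_two_of]
  push_cast
  ring

theorem det_blochMatrix (x₀ : ℝ) (x : Fin 3 → ℝ) :
    (blochMatrix x₀ x).det = (x₀ ^ 2 - x ⬝ᵥ x : ℝ) := by
  rw [blochMatrix_eq_of, det_fin_two_of]
  simp only [dotProduct, Fin.sum_univ_three]
  push_cast
  linear_combination (x 1 : ℂ) ^ 2 * Complex.I_sq

theorem posSemidef_blochMatrix_iff {x₀ : ℝ} {x : Fin 3 → ℝ} :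
    (blochMatrix x₀ x).PosSemidef ↔ 0 ≤ x₀ ∧ x ⬝ᵥ x ≤ x₀ ^ 2 := by
  rw [(isHermitian_blochMatrix x₀ x).posSemidef_iff_trace_nonneg_and_det_nonneg,
    trace_blochMatrix, det_blochMatrix, Complex.zero_le_real, Complex.zero_le_real]
  constructor <;> rintro ⟨h, h'⟩ <;> constructor <;> linarith

theorem Matrix.IsHermitian.exists_eq_blochMatrix {c : Matrix (Fin 2) (Fin 2) ℂ}
    (hc : c.IsHermitian) : ∃ x₀ x, c = blochMatrix x₀ x := by
  have h₀₀ : (c 0 0).im = 0 := Complex.conj_eq_iff_im.1 (hc.apply 0 0)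
  have h₁₁ : (c 1 1).im = 0 := Complex.conj_eq_iff_im.1 (hc.apply 1 1)
  have h₁₀ : c 1 0 = star (c 0 1) := (hc.apply 1 0).symm
  refine ⟨((c 0 0).re + (c 1 1).re) / 2,
    ![(c 0 1).re, -(c 0 1).im, ((c 0 0).re - (c 1 1).re) / 2], ?_⟩
  rw [blochMatrix_eq_of]
  ext i j
  fin_cases i <;> fin_cases j <;> simp [Complex.ext_iff, h₀₀, h₁₁, h₁₀] <;> ring

theorem exists_dotProduct_self_eq_one_and_dotProduct_eq_zero (l : Fin 3 → ℝ) :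
    ∃ w : Fin 3 → ℝ, w ⬝ᵥ w = 1 ∧ l ⬝ᵥ w = 0 := by
  rcases eq_or_ne (l 0 ^ 2 + l 1 ^ 2) 0 with h | h
  · have hl₀ : l 0 = 0 := by nlinarith [sq_nonneg (l 0), sq_nonneg (l 1)]
    exact ⟨![1, 0, 0], by simp [dotProduct, Fin.sum_univ_three, hl₀]⟩
  · set ρ := √(l 0 ^ 2 + l 1 ^ 2)
    have hρ : ρ ^ 2 = l 0 ^ 2 + l 1 ^ 2 := Real.sq_sqrt (by positivity)
    have hρ0 : ρ ≠ 0 := Real.sqrt_ne_zero'.2 ((by positivity : (0 : ℝ) ≤ _).lt_of_ne' h)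
    refine ⟨ρ⁻¹ • ![-l 1, l 0, 0], ?_, ?_⟩
    · simp only [dotProduct_smul, smul_dotProduct, cons_dotProduct_cons, dotProduct_of_isEmpty,
        smul_eq_mul]
      field_simp
      linarith
    · rw [dotProduct_smul, smul_eq_mul, mul_eq_zero]
      right
      simp [dotProduct, Fin.sum_univ_three, mul_comm]

noncomputable def unbiasedEffect (l : Fin 3 → ℝ) : Matrix (Fin 2) (Fin 2) ℂ :=
  blochMatrix 2⁻¹ ((2⁻¹ : ℝ) • l)

theorem one_sub_unbiasedEffect (l : Fin 3 → ℝ) : 1 - unbiasedEffect l = unbiasedEffect (-l) := by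
  rw [unbiasedEffect, unbiasedEffect, ← one_smul ℝ (1 : Matrix (Fin 2) (Fin 2) ℂ),
    smul_one_eq_blochMatrix, blochMatrix_sub]
  congr 1
  · norm_num
  · simp

variable {l : Fin 3 → ℝ}

theorem posSemidef_smul_one_sub_of_le_unbiasedEffect {c : Matrix (Fin 2) (Fin 2) ℂ}
    (hc : c.PosSemidef) (hle : (unbiasedEffect l - c).PosSemidef)
    (hle' : (unbiasedEffect (-l) - c).PosSemidef) :
    (((1 - l ⬝ᵥ l) / 2) • 1 - c).PosSemidef := by
  obtain ⟨c₀, v, rfl⟩ := hc.isHermitian.exists_eq_blochMatrix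
  rw [unbiasedEffect, blochMatrix_sub, posSemidef_blochMatrix_iff] at hle hle'
  rw [smul_one_eq_blochMatrix, blochMatrix_sub, posSemidef_blochMatrix_iff]
  rw [posSemidef_blochMatrix_iff] at hc
  simp only [sub_dotProduct, dotProduct_sub, neg_dotProduct, dotProduct_neg, smul_dotProduct,
    dotProduct_smul, smul_eq_mul, dotProduct_comm v l, zero_sub, smul_neg, neg_neg] at hle hle' ⊢
  have hL : 0 ≤ l ⬝ᵥ l := dotProduct_self_star_nonneg l
  have hS : 0 ≤ v ⬝ᵥ v := dotProduct_self_star_nonneg v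
  set L := l ⬝ᵥ l
  set S := v ⬝ᵥ v
  obtain ⟨hc₀, hSc⟩ := hc
  obtain ⟨ht, h₁⟩ := hle
  have hsum : L / 4 + S ≤ (2⁻¹ - c₀) ^ 2 := by linarith [hle'.2]
  have hLt : L / 2 ≤ 2⁻¹ - c₀ := by nlinarith [mul_nonneg ht hc₀]
  refine ⟨by linarith, ?_⟩
  -- `S ≤ c₀²` is the sharper bound for small `c₀`, `S ≤ (½ - c₀)² - L/4` for large `c₀`.
  rcases le_total c₀ ((1 - L) / 4) with h | h
  · calc S ≤ c₀ ^ 2 := hSc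
      _ ≤ _ := pow_le_pow_left₀ hc₀ (by linarith) 2
  · nlinarith

theorem exists_posSemidef_le_unbiasedEffect (hl : l ⬝ᵥ l ≤ 1) :
    ∃ c : Matrix (Fin 2) (Fin 2) ℂ, c.PosSemidef ∧ (unbiasedEffect l - c).PosSemidef ∧
      (unbiasedEffect (-l) - c).PosSemidef ∧
      ∀ r : ℝ, (r • 1 - c).PosSemidef → (1 - l ⬝ᵥ l) / 2 ≤ r := by
  obtain ⟨w, hw, hlw⟩ := exists_dotProduct_self_eq_one_and_dotProduct_eq_zero l
  set m := (1 - l ⬝ᵥ l) / 2 with hm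
  have hL : 0 ≤ l ⬝ᵥ l := dotProduct_self_star_nonneg l
  have hm0 : 0 ≤ m := by linarith
  refine ⟨blochMatrix (m / 2) ((m / 2) • w), ?_, ?_, ?_, fun r hr => ?_⟩
  · rw [posSemidef_blochMatrix_iff]
    simp only [smul_dotProduct, dotProduct_smul, smul_eq_mul, hw]
    constructor <;> nlinarith
  · rw [unbiasedEffect, blochMatrix_sub, posSemidef_blochMatrix_iff]
    simp only [sub_dotProduct, dotProduct_sub, smul_dotProduct, dotProduct_smul, smul_eq_mul,
      dotProduct_comm w l, hw, hlw]
    constructor <;> nlinarith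
  · rw [unbiasedEffect, blochMatrix_sub, posSemidef_blochMatrix_iff]
    simp only [sub_dotProduct, dotProduct_sub, neg_dotProduct, dotProduct_neg, smul_dotProduct,
      dotProduct_smul, smul_eq_mul, dotProduct_comm w l, hw, hlw]
    constructor <;> nlinarith
  · rw [smul_one_eq_blochMatrix, blochMatrix_sub, posSemidef_blochMatrix_iff] at hr
    simp only [zero_sub, neg_dotProduct, dotProduct_neg, smul_dotProduct, dotProduct_smul,
      smul_eq_mul, hw] at hr
    nlinarith

theorem unbiased_qubit_measurement_sharpness (l : Fin 3 → ℝ)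
    (hl : l 0 ^ 2 + l 1 ^ 2 + l 2 ^ 2 ≤ 1) (α : ℝ)
    (a : Matrix (Fin 2) (Fin 2) ℂ)
    (hadef : a = (1 / 2 : ℝ) • ((1 : Matrix (Fin 2) (Fin 2) ℂ)
      + l 0 • pauli1 + l 1 • pauli2 + l 2 • pauli3)) :
    (∀ c : Matrix (Fin 2) (Fin 2) ℂ, c.PosSemidef → (a - c).PosSemidef →
        ((1 - a) - c).PosSemidef →
        ((1 - α) • (1 : Matrix (Fin 2) (Fin 2) ℂ) - c).PosSemidef) ↔
      α ≤ (1 + (l 0 ^ 2 + l 1 ^ 2 + l 2 ^ 2)) / 2 := by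
  have ha : a = unbiasedEffect l := by
    rw [hadef, ← one_smul ℝ (1 : Matrix (Fin 2) (Fin 2) ℂ), ← blochMatrix, smul_blochMatrix,
      unbiasedEffect]
    norm_num
  have hL : l 0 ^ 2 + l 1 ^ 2 + l 2 ^ 2 = l ⬝ᵥ l := by
    simp only [dotProduct, Fin.sum_univ_three, sq]
  subst ha
  rw [one_sub_unbiasedEffect, hL]
  rw [hL] at hl
  constructor
  · intro hsharp
    obtain ⟨c, hc, hle, hle', hnorm⟩ := exists_posSemidef_le_unbiasedEffect hl
    linarith [hnorm _ (hsharp c hc hle hle')]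
  · intro hα c hc hle hle'
    have hsplit : (1 - α) • (1 : Matrix (Fin 2) (Fin 2) ℂ) - c =
        (((1 - l ⬝ᵥ l) / 2) • 1 - c) + (1 - α - (1 - l ⬝ᵥ l) / 2) • 1 := by
      module
    rw [hsplit]
    exact (posSemidef_smul_one_sub_of_le_unbiasedEffect hc hle hle').add
      (PosSemidef.one.smul (by linarith))
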